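/- arXiv:1811.10387 — 2 statements merged into one kernel-verified Lean document; each statement's English description precedes it below -/
import Mathlib

section
/- Let r₀ > 0 and let f : [r₀, ∞) → ℝ be increasing and right-continuous, with Lebesgue–Stieltjes measure df. (1) If p > 0 and the Stieltjes integral ∫_{(r₀,∞)} t^{−p} df(t) is finite, then limsup_{r→∞} max(f(r),0)/r^p = 0 and ∫_{r₀}^{∞} |f(t)|/t^{p+1} dt < ∞, and for every r ≥ r₀ one has ∫_{(r,∞)} t^{−p} df(t) = −f(r)/r^p + p·∫_{r}^{∞} f(t)/t^{p+1} dt. (2) If p = 0 and the total Stieltjes mass df((r₀,∞)) is finite, then the limit lim_{r→∞} f(r) exists and is finite. -/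
/-!
Write `df` for the Stieltjes measure of `f`. Since `t ^ (-p) = ∫_t^∞ p s ^ (-(p+1)) ds`, Tonelli
turns the Stieltjes integral over `(r, ∞)` into
`∫_{(r,∞)} t ^ (-p) df(t) = ∫_r^∞ p s ^ (-(p+1)) (f s - f r) ds`,
the integration-by-parts formula in disguise; it gives both the convergence of
`∫ f t / t ^ (p+1)` and the identity. The type is `0` because
`f b - f r ≤ b ^ p ∫_{(r,∞)} t ^ (-p) df(t)` for `r ≤ b`, and the tail integral tends to `0`.
For `p = 0`, finite mass bounds the increasing function `f`.
-/

open MeasureTheory Filter Set Real Topology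

theorem ofReal_rpow_neg_eq_lintegral_Ioi {p t : ℝ} (hp : 0 < p) (ht : 0 < t) :
    ENNReal.ofReal (t ^ (-p)) = ∫⁻ s in Ioi t, ENNReal.ofReal (p * s ^ (-(p + 1))) := by
  have hexp : -(p + 1) < -1 := by linarith
  rw [← ofReal_integral_eq_lintegral_ofReal
      ((integrableOn_Ioi_rpow_of_lt hexp ht).const_mul p), integral_const_mul,
    integral_Ioi_rpow_of_lt hexp ht, show -(p + 1) + 1 = -p by ring]
  · congr 1
    field_simp
  · filter_upwards [ae_restrict_mem _root_.measurableSet_Ioi] with s hs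
    exact mul_nonneg hp.le (rpow_nonneg (ht.trans hs).le _)

theorem div_rpow_add_one_eq {p t : ℝ} (hp : p ≠ 0) (ht : 0 ≤ t) (x c : ℝ) :
    x / t ^ (p + 1) = p⁻¹ * (p * t ^ (-(p + 1)) * (x - c)) + c * t ^ (-(p + 1)) := by
  rw [rpow_neg ht]
  field_simp
  ring

namespace StieltjesFunction

variable (f : StieltjesFunction ℝ)

theorem lintegral_Ioi_lintegral_Ioi {k : ℝ → ENNReal} (hk : Measurable k) (r : ℝ) :
    ∫⁻ t in Ioi r, (∫⁻ s in Ioi t, k s) ∂f.measure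
      = ∫⁻ s in Ioi r, k s * ENNReal.ofReal (f s - f r) := by
  have hmeas : Measurable (Function.uncurry fun t s : ℝ => (Ioi t).indicator k s) :=
    Measurable.ite (measurableSet_lt measurable_fst measurable_snd) (hk.comp measurable_snd)
      measurable_const
  have hinner : ∀ s,
      ∫⁻ t in Ioi r, (Ioi t).indicator k s ∂f.measure = k s * f.measure (Ioo r s) := by
    intro s
    have : ∀ t, (Ioi t).indicator k s = (Iio s).indicator (fun _ => k s) t := by
      intro t; simp [indicator]
    simp_rw [this]
    rw [lintegral_indicator_const measurableSet_Iio, Measure.restrict_apply measurableSet_Iio,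
      inter_comm, Ioi_inter_Iio]
  have hae : (fun s => k s * f.measure (Ioo r s))
      =ᵐ[volume] (Ioi r).indicator fun s => k s * ENNReal.ofReal (f s - f r) := by
    filter_upwards [f.countable_leftLim_ne.ae_notMem volume] with s hs
    rcases le_or_gt s r with hsr | hrs
    · simp [hsr]
    · simp only [not_not] at hs
      rw [f.measure_Ioo, hs, indicator_of_mem (mem_Ioi.2 hrs)]
  calc ∫⁻ t in Ioi r, (∫⁻ s in Ioi t, k s) ∂f.measure
      = ∫⁻ t in Ioi r, (∫⁻ s, (Ioi t).indicator k s) ∂f.measure := by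
        simp_rw [lintegral_indicator _root_.measurableSet_Ioi]
    _ = ∫⁻ s, k s * f.measure (Ioo r s) := by
        rw [lintegral_lintegral_swap hmeas.aemeasurable]
        simp_rw [hinner]
    _ = ∫⁻ s in Ioi r, k s * ENNReal.ofReal (f s - f r) := by
        rw [lintegral_congr_ae hae, lintegral_indicator _root_.measurableSet_Ioi]

variable {f}

theorem lintegral_Ioi_rpow_neg {p r : ℝ} (hp : 0 < p) (hr : 0 < r) :
    ∫⁻ t in Ioi r, ENNReal.ofReal (t ^ (-p)) ∂f.measure
      = ∫⁻ s in Ioi r, ENNReal.ofReal (p * s ^ (-(p + 1)) * (f s - f r)) := by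
  rw [setLIntegral_congr_fun _root_.measurableSet_Ioi
      fun t ht => ofReal_rpow_neg_eq_lintegral_Ioi hp (hr.trans ht),
    f.lintegral_Ioi_lintegral_Ioi (by fun_prop) r]
  refine setLIntegral_congr_fun _root_.measurableSet_Ioi fun s hs => ?_
  rw [ENNReal.ofReal_mul (mul_nonneg hp.le (rpow_nonneg (hr.trans hs).le _))]

theorem ae_restrict_Ioi_nonneg_mul_rpow_mul_sub {p r : ℝ} (hp : 0 ≤ p) (hr : 0 ≤ r) :
    0 ≤ᵐ[volume.restrict (Ioi r)] fun s => p * s ^ (-(p + 1)) * (f s - f r) := by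
  filter_upwards [ae_restrict_mem _root_.measurableSet_Ioi] with s hs
  exact mul_nonneg (mul_nonneg hp (rpow_nonneg (hr.trans hs.le) _)) (sub_nonneg.2 (f.mono hs.le))

theorem integral_Ioi_rpow_neg {p r : ℝ} (hp : 0 < p) (hr : 0 < r) :
    ∫ t in Ioi r, t ^ (-p) ∂f.measure = ∫ s in Ioi r, p * s ^ (-(p + 1)) * (f s - f r) := by
  have hf : Measurable f := f.mono.measurable
  have hpow : 0 ≤ᵐ[f.measure.restrict (Ioi r)] fun t => t ^ (-p) := by
    filter_upwards [ae_restrict_mem _root_.measurableSet_Ioi] with t ht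
    exact rpow_nonneg (hr.trans ht).le _
  rw [integral_eq_lintegral_of_nonneg_ae hpow (by fun_prop : Measurable _).aestronglyMeasurable,
    integral_eq_lintegral_of_nonneg_ae (ae_restrict_Ioi_nonneg_mul_rpow_mul_sub hp.le hr.le)
      (by fun_prop : Measurable _).aestronglyMeasurable,
    lintegral_Ioi_rpow_neg hp hr]

theorem integrableOn_Ioi_mul_rpow_mul_sub {p r : ℝ} (hp : 0 < p) (hr : 0 < r)
    (hint : IntegrableOn (fun t => t ^ (-p)) (Ioi r) f.measure) :
    IntegrableOn (fun s => p * s ^ (-(p + 1)) * (f s - f r)) (Ioi r) := by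
  have hf : Measurable f := f.mono.measurable
  refine ⟨(by fun_prop : Measurable _).aestronglyMeasurable, ?_⟩
  rw [hasFiniteIntegral_iff_ofReal (ae_restrict_Ioi_nonneg_mul_rpow_mul_sub hp.le hr.le),
    ← lintegral_Ioi_rpow_neg hp hr]
  exact hint.lintegral_lt_top

theorem integrableOn_Ioi_div_rpow_add_one {p r : ℝ} (hp : 0 < p) (hr : 0 < r)
    (hint : IntegrableOn (fun t => t ^ (-p)) (Ioi r) f.measure) :
    IntegrableOn (fun t => f t / t ^ (p + 1)) (Ioi r) := by
  refine IntegrableOn.congr_fun ?_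
    (fun t ht => (div_rpow_add_one_eq hp.ne' (hr.trans ht).le (f t) (f r)).symm)
    _root_.measurableSet_Ioi
  exact ((integrableOn_Ioi_mul_rpow_mul_sub hp hr hint).const_mul _).add
    ((integrableOn_Ioi_rpow_of_lt (by linarith) hr).const_mul _)

theorem integral_Ioi_rpow_neg_eq {p r : ℝ} (hp : 0 < p) (hr : 0 < r)
    (hint : IntegrableOn (fun t => t ^ (-p)) (Ioi r) f.measure) :
    ∫ t in Ioi r, t ^ (-p) ∂f.measure = -(f r / r ^ p) + p * ∫ t in Ioi r, f t / t ^ (p + 1) := by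
  have hexp : -(p + 1) < -1 := by linarith
  rw [setIntegral_congr_fun _root_.measurableSet_Ioi
      fun t ht => div_rpow_add_one_eq hp.ne' (hr.trans ht).le (f t) (f r),
    integral_add ((integrableOn_Ioi_mul_rpow_mul_sub hp hr hint).const_mul _)
      ((integrableOn_Ioi_rpow_of_lt hexp hr).const_mul _),
    integral_const_mul, integral_const_mul, integral_Ioi_rpow_of_lt hexp hr,
    show -(p + 1) + 1 = -p by ring, rpow_neg hr.le, integral_Ioi_rpow_neg hp hr]
  field_simp
  ring

theorem sub_le_rpow_mul_integral_Ioi {p r b : ℝ} (hp : 0 ≤ p) (hr : 0 < r) (hrb : r ≤ b)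
    (hint : IntegrableOn (fun t => t ^ (-p)) (Ioi r) f.measure) :
    f b - f r ≤ b ^ p * ∫ t in Ioi r, t ^ (-p) ∂f.measure := by
  have hb : 0 < b := hr.trans_le hrb
  have hIoc : f.measure.real (Ioc r b) = f b - f r := by
    rw [measureReal_def, f.measure_Ioc, ENNReal.toReal_ofReal (sub_nonneg.2 (f.mono hrb))]
  have hlower : (f b - f r) * b ^ (-p) ≤ ∫ t in Ioc r b, t ^ (-p) ∂f.measure := by
    rw [← hIoc, ← smul_eq_mul, ← setIntegral_const]
    refine setIntegral_mono_on ?_ (hint.mono_set Ioc_subset_Ioi_self) measurableSet_Ioc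
      fun t ht => rpow_le_rpow_of_nonpos (hr.trans ht.1) ht.2 (neg_nonpos.2 hp)
    exact integrableOn_const (by rw [f.measure_Ioc]; exact ENNReal.ofReal_ne_top)
  have hupper : ∫ t in Ioc r b, t ^ (-p) ∂f.measure ≤ ∫ t in Ioi r, t ^ (-p) ∂f.measure := by
    refine setIntegral_mono_set hint ?_ Ioc_subset_Ioi_self.eventuallyLE
    filter_upwards [ae_restrict_mem _root_.measurableSet_Ioi] with t ht
    exact rpow_nonneg (hr.trans ht).le _
  rw [rpow_neg hb.le, ← div_eq_mul_inv, div_le_iff₀ (rpow_pos_of_pos hb p), mul_comm] at hlower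
  exact hlower.trans (mul_le_mul_of_nonneg_left hupper (rpow_pos_of_pos hb p).le)

theorem max_div_rpow_le_add_integral_Ioi {p r b : ℝ} (hp : 0 ≤ p) (hr : 0 < r) (hrb : r ≤ b)
    (hint : IntegrableOn (fun t => t ^ (-p)) (Ioi r) f.measure) :
    max (f b) 0 / b ^ p ≤ max (f r) 0 / b ^ p + ∫ t in Ioi r, t ^ (-p) ∂f.measure := by
  have hbp : 0 < b ^ p := rpow_pos_of_pos (hr.trans_le hrb) p
  have hint_nonneg : 0 ≤ ∫ t in Ioi r, t ^ (-p) ∂f.measure :=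
    setIntegral_nonneg _root_.measurableSet_Ioi fun t ht => rpow_nonneg (hr.trans ht).le _
  have hfb := sub_le_rpow_mul_integral_Ioi hp hr hrb hint
  rw [div_add' _ _ _ hbp.ne']
  gcongr
  refine max_le ?_ (by positivity)
  linarith [le_max_left (f r) 0]

theorem tendsto_max_div_rpow_atTop {p r₀ : ℝ} (hp : 0 < p) (hr₀ : 0 < r₀)
    (hint : IntegrableOn (fun t => t ^ (-p)) (Ioi r₀) f.measure) :
    Tendsto (fun b => max (f b) 0 / b ^ p) atTop (𝓝 0) := by
  have htail : Tendsto (fun r => ∫ t in Ioi r, t ^ (-p) ∂f.measure) atTop (𝓝 0) :=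
    tendsto_integral_Ioi_zero tendsto_id
  refine tendsto_order.2 ⟨fun a ha => ?_, fun δ hδ => ?_⟩
  · filter_upwards [eventually_gt_atTop 0] with b hb
    exact ha.trans_le (div_nonneg (le_max_right _ _) (rpow_pos_of_pos hb p).le)
  · obtain ⟨r, hr₀r, hr⟩ := ((eventually_ge_atTop r₀).and
      (htail.eventually (eventually_lt_nhds (half_pos hδ)))).exists
    have hdecay : Tendsto (fun b => max (f r) 0 / b ^ p) atTop (𝓝 0) :=
      tendsto_const_nhds.div_atTop (tendsto_rpow_atTop hp)
    filter_upwards [eventually_ge_atTop r, hdecay.eventually (eventually_lt_nhds (half_pos hδ))]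
      with b hrb hb
    linarith [max_div_rpow_le_add_integral_Ioi hp.le (hr₀.trans_le hr₀r) hrb
      (hint.mono_set (Ioi_subset_Ioi hr₀r))]

theorem bddAbove_range_of_measure_Ioi_ne_top {a : ℝ} (h : f.measure (Ioi a) ≠ ⊤) :
    BddAbove (range f) := by
  refine ⟨f a + f.measure.real (Ioi a), ?_⟩
  rintro x ⟨y, rfl⟩
  rcases le_total y a with hya | hay
  · exact (f.mono hya).trans (le_add_of_nonneg_right measureReal_nonneg)
  · have hIoc : f.measure.real (Ioc a y) ≤ f.measure.real (Ioi a) :=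
      measureReal_mono Ioc_subset_Ioi_self h
    rw [measureReal_def, f.measure_Ioc, ENNReal.toReal_ofReal (sub_nonneg.2 (f.mono hay))] at hIoc
    linarith

end StieltjesFunction

/-- Proposition 1 (iii), for an increasing right-continuous function `f` (a Stieltjes
function) on `[r₀, ∞)`: (1) if `p > 0` and the Stieltjes integral `∫_{(r₀,∞)} t^{-p} df(t)`
is finite, then the type of `f` at order `p` near `∞` is `0`, the integral
`∫_{r₀}^∞ |f(t)|/t^{p+1} dt` converges, and the integration-by-parts identity
`∫_{(r,∞)} t^{-p} df(t) = -f(r)/r^p + p ∫_r^∞ f(t)/t^{p+1} dt` holds for all `r ≥ r₀`;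
(2) if `p = 0`, i.e. the total Stieltjes mass `df((r₀,∞))` is finite, then
`lim_{r→∞} f(r)` exists and is finite. -/
theorem convergence_class_at_infty_of_stieltjes_integral
    (r₀ : ℝ) (hr₀ : 0 < r₀) (f : StieltjesFunction ℝ) :
    (∀ p : ℝ, 0 < p →
      IntegrableOn (fun t : ℝ => t ^ (-p)) (Ioi r₀) f.measure →
      (limsup (fun r : ℝ => max (f r) 0 / r ^ p) atTop = 0 ∧
       IntegrableOn (fun t : ℝ => |f t| / t ^ (p + 1)) (Ioi r₀) volume ∧
       ∀ r : ℝ, r₀ ≤ r →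
         (∫ t in Ioi r, t ^ (-p) ∂f.measure)
           = -(f r / r ^ p) + p * ∫ t in Ioi r, f t / t ^ (p + 1))) ∧
    (f.measure (Ioi r₀) < ⊤ → ∃ L : ℝ, Tendsto (fun r : ℝ => f r) atTop (nhds L)) := by
  refine ⟨fun p hp hint => ⟨?_, ?_, fun r hr => ?_⟩, fun hfin => ?_⟩
  · exact (f.tendsto_max_div_rpow_atTop hp hr₀ hint).limsup_eq
  · refine IntegrableOn.congr_fun (f.integrableOn_Ioi_div_rpow_add_one hp hr₀ hint).abs
      (fun t ht => ?_) measurableSet_Ioi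
    rw [abs_div, abs_of_pos (rpow_pos_of_pos (hr₀.trans ht) _)]
  · exact f.integral_Ioi_rpow_neg_eq hp (hr₀.trans_le hr) (hint.mono_set (Ioi_subset_Ioi hr))
  · exact ⟨_, tendsto_atTop_ciSup f.mono (f.bddAbove_range_of_measure_Ioi_ne_top hfin.ne)⟩
end

section
/- Let μ be a positive Borel measure on ℂ, finite on compact sets, satisfying the Blaschke condition near infinity in the upper half-plane, and let μ̄ denote the restriction of μ to the closed upper half-plane {Im z ≥ 0}. Then the balayage μ^bal of μ out of the upper half-plane is a well-defined positive Borel measure finite on compact sets, and for all real t₁ < t₂ with t₁·t₂ ≥ 0 and every a ∈ (0,1), setting x₀ := (t₁+t₂)/2, r := (t₂−t₁)/2, and E := (t₁,t₂] if t₁ ≥ 0 and E := [t₁,t₂) if t₂ ≤ 0, one has 0 ≤ μ^bal(E) ≤ μ̄( {w : |w − x₀| ≤ r} ) + (2r/(a·|x₀|))·μ̄( {w : |w| ≤ 3|x₀|/a} ) + (r/(1−a)²)·∫_{{Im z ≥ 0, |z| ≥ |x₀|}} (Im z)/|z|² dμ(z) + r·max( 0, ∫_{r}^{a|x₀|} μ̄({w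 : |w − x₀| ≤ t})/t² dt ). -/
/-!
Seen from `z` in the upper half-plane, the interval `E = (x₀ - r, x₀ + r]` has harmonic measure
`θ/π`, where `θ` is the angle it subtends at `z`; Jordan's inequality `2θ/π ≤ sin θ` gives
`ω(z, E) ≤ r/|z - x₀|` as soon as `|z - x₀| > r`, while for `|z| > 3|x₀|/a` the Poisson kernel
is at most `Im z/(π(1-a)²|z|²)` on `E`. Cutting the upper half-plane along `|z - x₀| = r`,
`|z - x₀| = a|x₀|` and `|z| = 3|x₀|/a` yields a pointwise majorant of `ω(·, E)`, in which
`r/|z - x₀| - r/(a|x₀|)` is written as `∫_{|z - x₀|}^{a|x₀|} r/t² dt`; integrating against `μ`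
and exchanging the order of integration gives the stated bound. A compact set lies in an
interval, whose harmonic measure is `O(Im z/|z|²)` at infinity, so the Blaschke condition makes
its balayage finite.
-/

open MeasureTheory Filter Set
open scoped ENNReal

/-- The Poisson kernel of the upper half-plane at `z`, evaluated at `t ∈ ℝ`. -/
noncomputable def poisson (z : ℂ) (t : ℝ) : ℝ :=
  (1 / Real.pi) * z.im / ((t - z.re) ^ 2 + z.im ^ 2)

/-- The harmonic measure `ω(z,B)` of a Borel set `B ⊆ ℂ` at a point `z` of the upper
half-plane: the integral of the Poisson kernel over the real trace of `B`. -/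
noncomputable def omegaUHP (z : ℂ) (B : Set ℂ) : ℝ :=
  ∫ t in {t : ℝ | (t : ℂ) ∈ B}, poisson z t

/-- The balayage of a positive measure `μ` on `ℂ` out of the upper half-plane, as a set
function: `μ^bal(B) = ∫_{Im z>0} ω(z,B) dμ(z) + μ(B ∩ {Im z ≤ 0})`. -/
noncomputable def balUHP (μ : Measure ℂ) (B : Set ℂ) : ℝ≥0∞ :=
  (∫⁻ z in {z : ℂ | 0 < z.im}, ENNReal.ofReal (omegaUHP z B) ∂μ)
    + μ (B ∩ {z : ℂ | z.im ≤ 0})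

lemma Real.arctan_sub_arctan_le {a b : ℝ} (hab : a ≤ b) (h : -1 < a * b) :
    Real.arctan b - Real.arctan a
      ≤ Real.pi / 2 * ((b - a) / (√(1 + a ^ 2) * √(1 + b ^ 2))) := by
  have hθ₀ : 0 ≤ Real.arctan b - Real.arctan a :=
    sub_nonneg.2 (Real.arctan_strictMono.monotone hab)
  have hθ₁ : Real.arctan b - Real.arctan a ≤ Real.pi / 2 := by
    have := Real.arctan_add_arctan_lt_pi_div_two (x := b) (y := -a) (by linarith)
    rw [Real.arctan_neg] at this
    linarith
  have hsin : Real.sin (Real.arctan b - Real.arctan a)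
      = (b - a) / (√(1 + a ^ 2) * √(1 + b ^ 2)) := by
    rw [Real.sin_sub, Real.sin_arctan, Real.cos_arctan, Real.sin_arctan, Real.cos_arctan]
    field_simp
  have hjordan := Real.mul_le_sin hθ₀ hθ₁
  rw [← hsin]
  have := Real.pi_pos
  calc Real.arctan b - Real.arctan a
      = Real.pi / 2 * (2 / Real.pi * (Real.arctan b - Real.arctan a)) := by field_simp
    _ ≤ _ := by gcongr

lemma lintegral_Ioc_ofReal_div_sq {κ s b : ℝ} (hκ : 0 ≤ κ) (hs : 0 < s) (hsb : s ≤ b) :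
    ∫⁻ t in Ioc s b, ENNReal.ofReal (κ / t ^ 2) = ENNReal.ofReal (κ / s - κ / b) := by
  have hcont : ContinuousOn (fun t : ℝ => κ / t ^ 2) (Icc s b) :=
    continuousOn_const.div (continuousOn_pow 2) fun t ht => by nlinarith [ht.1]
  have hderiv : ∀ t ∈ uIcc s b, HasDerivAt (fun t : ℝ => -(κ / t)) (κ / t ^ 2) t := by
    intro t ht
    rw [uIcc_of_le hsb] at ht
    have ht₀ : t ≠ 0 := by linarith [ht.1]
    have h : HasDerivAt (fun u : ℝ => -(κ * u⁻¹)) (-(κ * -(t ^ 2)⁻¹)) t :=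
      ((hasDerivAt_inv ht₀).const_mul κ).neg
    simp only [div_eq_mul_inv]
    convert h using 1
    ring
  rw [← ofReal_integral_eq_lintegral_ofReal
      ((hcont.integrableOn_compact isCompact_Icc).mono_set Ioc_subset_Icc_self)
      (ae_of_all _ fun t => by positivity),
    ← intervalIntegral.integral_of_le hsb,
    intervalIntegral.integral_eq_sub_of_hasDerivAt hderiv
      (hcont.intervalIntegrable_of_Icc hsb)]
  ring_nf

section BallKernel

variable {E : Type*} [NormedAddCommGroup E]

lemma lintegral_lintegral_Ioc_indicator_eq_ofReal_integral [MeasurableSpace E]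
    [OpensMeasurableSpace E] (ν : Measure E) [SFinite ν] (c : E)
    {κ r b : ℝ} (hκ : 0 ≤ κ) (hr : 0 < r) (hν : ν {w | ‖w - c‖ ≤ b} ≠ ⊤) :
    ∫⁻ z, (∫⁻ t in Ioc r b, {w | ‖w - c‖ ≤ t}.indicator (fun _ => ENNReal.ofReal (κ / t ^ 2)) z) ∂ν
      = ENNReal.ofReal (κ * ∫ t in Ioc r b, (ν {w | ‖w - c‖ ≤ t}).toReal / t ^ 2) := by
  set m : ℝ → ℝ := fun t => (ν {w | ‖w - c‖ ≤ t}).toReal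
  have hdist : Measurable fun w : E => ‖w - c‖ :=
    (continuous_norm.comp (continuous_sub_right c)).measurable
  have hball : ∀ t, MeasurableSet {w : E | ‖w - c‖ ≤ t} := fun t =>
    measurableSet_le hdist measurable_const
  have hfin : ∀ t ≤ b, ν {w | ‖w - c‖ ≤ t} ≠ ⊤ := fun t ht =>
    ne_top_of_le_ne_top hν (measure_mono fun w hw => le_trans hw ht)
  have hmono : MonotoneOn m (Icc r b) := fun t _ u hu htu =>
    ENNReal.toReal_mono (hfin u hu.2) (measure_mono fun w hw => le_trans hw htu)
  have hint : IntegrableOn (fun t => m t / t ^ 2) (Ioc r b) := by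
    refine (IntegrableOn.mul_continuousOn (hmono.integrableOn_isCompact isCompact_Icc)
      (continuousOn_const.div (continuousOn_pow 2) fun t ht => ?_) isCompact_Icc
      (g' := fun t : ℝ => 1 / t ^ 2)).mono_set Ioc_subset_Icc_self |>.congr_fun
      (fun t _ => by ring) measurableSet_Ioc
    nlinarith [ht.1]
  have hmeas : Measurable fun p : E × ℝ =>
      {w | ‖w - c‖ ≤ p.2}.indicator (fun _ => ENNReal.ofReal (κ / p.2 ^ 2)) p.1 :=
    Measurable.ite (measurableSet_le (hdist.comp measurable_fst) measurable_snd) (by fun_prop)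
      measurable_const
  rw [lintegral_lintegral_swap hmeas.aemeasurable, ← integral_const_mul,
    ofReal_integral_eq_lintegral_ofReal (hint.const_mul κ)
      (ae_restrict_of_forall_mem measurableSet_Ioc fun t ht => by positivity)]
  refine setLIntegral_congr_fun measurableSet_Ioc fun t ht => ?_
  rw [lintegral_indicator_const (hball t), mul_div_assoc', mul_div_right_comm,
    ENNReal.ofReal_mul (by positivity), ENNReal.ofReal_toReal (hfin t ht.2)]

lemma ofReal_div_sub_div_le_lintegral_indicator {c z : E} {κ r b : ℝ} (hκ : 0 ≤ κ) (hr : 0 < r)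
    (hrz : r ≤ ‖z - c‖) (hzb : ‖z - c‖ ≤ b) :
    ENNReal.ofReal (κ / ‖z - c‖ - κ / b)
      ≤ ∫⁻ t in Ioc r b, {w | ‖w - c‖ ≤ t}.indicator (fun _ => ENNReal.ofReal (κ / t ^ 2)) z := by
  rw [← lintegral_Ioc_ofReal_div_sq hκ (hr.trans_le hrz) hzb]
  refine (setLIntegral_mono' measurableSet_Ioc fun t ht => ?_).trans
    (lintegral_mono_set (Ioc_subset_Ioc_left hrz))
  rw [indicator_of_mem (show z ∈ {w | ‖w - c‖ ≤ t} from ht.1.le)]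

end BallKernel

section Poisson

variable {z : ℂ}

lemma norm_sub_ofReal_sq (z : ℂ) (t : ℝ) : ‖z - t‖ ^ 2 = (t - z.re) ^ 2 + z.im ^ 2 := by
  rw [Complex.sq_norm, Complex.normSq_apply]
  simp only [Complex.sub_re, Complex.sub_im, Complex.ofReal_re, Complex.ofReal_im, sub_zero]
  ring

lemma poisson_eq (z : ℂ) (t : ℝ) : poisson z t = z.im / (Real.pi * ‖z - t‖ ^ 2) := by
  simp only [poisson, norm_sub_ofReal_sq, div_eq_mul_inv, mul_inv]
  ring

lemma poisson_nonneg (hz : 0 < z.im) (t : ℝ) : 0 ≤ poisson z t := by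
  rw [poisson_eq]
  positivity

lemma continuous_poisson (hz : 0 < z.im) : Continuous (poisson z) := by
  refine continuous_const.div (by fun_prop) fun t => ?_
  nlinarith [sq_nonneg (t - z.re)]

lemma integral_poisson_Ioc {p q : ℝ} (hpq : p ≤ q) :
    ∫ t in Ioc p q, poisson z t
      = (Real.arctan ((q - z.re) / z.im) - Real.arctan ((p - z.re) / z.im)) / Real.pi := by
  have hshift := intervalIntegral.integral_comp_sub_right
    (fun u => z.im / (z.im ^ 2 + u ^ 2)) (a := p) (b := q) z.re
  simp only [integral_div_sq_add_sq] at hshift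
  rw [← intervalIntegral.integral_of_le hpq, ← hshift, ← intervalIntegral.integral_div]
  congr 1 with t
  rw [poisson]
  ring

lemma integral_poisson_Ioc_le_one {p q : ℝ} (hpq : p ≤ q) : ∫ t in Ioc p q, poisson z t ≤ 1 := by
  rw [integral_poisson_Ioc hpq, div_le_one Real.pi_pos]
  linarith [Real.arctan_lt_pi_div_two ((q - z.re) / z.im),
    Real.neg_pi_div_two_lt_arctan ((p - z.re) / z.im)]

lemma poisson_le_of_le_norm_sub (hz : 0 ≤ z.im) {t d : ℝ} (hd : 0 < d) (h : d ≤ ‖z - t‖) :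
    poisson z t ≤ z.im / (Real.pi * d ^ 2) := by
  rw [poisson_eq]
  have := Real.pi_pos
  gcongr

lemma integral_poisson_Ioc_le_of_mul_norm_le (hz : 0 < z.im) {x₀ r c : ℝ} (hr : 0 ≤ r)
    (hc : 0 < c) (h : c * ‖z‖ ≤ ‖z - x₀‖ - r) :
    ∫ t in Ioc (x₀ - r) (x₀ + r), poisson z t
      ≤ 2 * r / (Real.pi * c ^ 2) * (z.im / ‖z‖ ^ 2) := by
  have hz₀ : 0 < ‖z‖ := norm_pos_iff.2 fun h0 => by simp [h0] at hz
  have hbound : ∀ t ∈ Ioc (x₀ - r) (x₀ + r), ‖poisson z t‖ ≤ z.im / (Real.pi * (c * ‖z‖) ^ 2) := by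
    intro t ht
    rw [Real.norm_of_nonneg (poisson_nonneg hz t)]
    refine poisson_le_of_le_norm_sub hz.le (by positivity) ?_
    have hdist : ‖((t - x₀ : ℝ) : ℂ)‖ ≤ r := by
      rw [Complex.norm_real, Real.norm_eq_abs, abs_le]
      constructor <;> linarith [ht.1, ht.2]
    have htri : ‖z - x₀‖ ≤ ‖z - t‖ + ‖((t - x₀ : ℝ) : ℂ)‖ := by
      refine le_of_eq_of_le ?_ (norm_add_le _ _)
      push_cast
      ring_nf
    linarith
  have := norm_setIntegral_le_of_norm_le_const (measure_Ioc_lt_top (μ := volume)) hbound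
  rw [Real.volume_real_Ioc_of_le (by linarith)] at this
  calc ∫ t in Ioc (x₀ - r) (x₀ + r), poisson z t
      ≤ z.im / (Real.pi * (c * ‖z‖) ^ 2) * (x₀ + r - (x₀ - r)) := (Real.le_norm_self _).trans this
    _ = _ := by field_simp; ring

lemma integral_poisson_Ioc_le_div (hz : 0 < z.im) {x₀ r : ℝ} (hr : 0 < r)
    (hs : r < ‖z - x₀‖) :
    ∫ t in Ioc (x₀ - r) (x₀ + r), poisson z t ≤ r / ‖z - x₀‖ := by
  set s := ‖z - x₀‖
  set y := z.im
  set u := z.re - x₀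
  have hs2 : s ^ 2 = u ^ 2 + y ^ 2 := by rw [norm_sub_ofReal_sq]; ring
  obtain ⟨a, ha⟩ : ∃ a, a = (x₀ - r - z.re) / y := ⟨_, rfl⟩
  obtain ⟨b, hb⟩ : ∃ b, b = (x₀ + r - z.re) / y := ⟨_, rfl⟩
  have hay : a * y = -(u + r) := by rw [ha]; field_simp; ring
  have hby : b * y = r - u := by rw [hb]; field_simp; ring
  have hba : b - a = 2 * r / y := by rw [eq_div_iff hz.ne', sub_mul, hay, hby]; ring
  have hab : -1 < a * b := by
    have : (a * b + 1) * y ^ 2 = s ^ 2 - r ^ 2 := by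
      linear_combination (b * y) * hay - (u + r) * hby - hs2
    have : 0 < (a * b + 1) * y ^ 2 := by rw [this, sub_pos]; gcongr
    nlinarith [pos_of_mul_pos_left this (sq_nonneg y)]
  have hgeom : s ≤ y * (√(1 + a ^ 2) * √(1 + b ^ 2)) := by
    rw [← Real.sqrt_mul (by positivity), ← div_le_iff₀' hz]
    refine Real.le_sqrt_of_sq_le ?_
    -- the difference of the two sides is `(u² - r²)² + u²y² + 2r²y²`
    have key : (u ^ 2 + y ^ 2) * y ^ 2 ≤ ((u + r) ^ 2 + y ^ 2) * ((u - r) ^ 2 + y ^ 2) := by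
      nlinarith [sq_nonneg (u ^ 2 - r ^ 2), sq_nonneg (u * y), sq_nonneg (r * y)]
    have hprod : (1 + a ^ 2) * (1 + b ^ 2) * y ^ 2 * y ^ 2
        = ((u + r) ^ 2 + y ^ 2) * ((u - r) ^ 2 + y ^ 2) := by
      rw [show (u + r) ^ 2 = (a * y) ^ 2 by rw [hay]; ring,
        show (u - r) ^ 2 = (b * y) ^ 2 by rw [hby]; ring]
      ring
    rw [← hs2, ← hprod] at key
    rw [div_pow, div_le_iff₀ (by positivity)]
    exact le_of_mul_le_mul_right key (by positivity)
  rw [integral_poisson_Ioc (by linarith), ← ha, ← hb, div_le_iff₀ Real.pi_pos]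
  refine (Real.arctan_sub_arctan_le (by rw [← sub_nonneg, hba]; positivity) hab).trans ?_
  rw [hba, div_div]
  calc Real.pi / 2 * (2 * r / (y * (√(1 + a ^ 2) * √(1 + b ^ 2))))
      ≤ Real.pi / 2 * (2 * r / s) := by gcongr; linarith
    _ = r / s * Real.pi := by ring

lemma integral_poisson_Ioc_le_of_three_mul_lt (hz : 0 < z.im) {x₀ r a : ℝ}
    (hr : 0 ≤ r) (hrx : r ≤ |x₀|) (ha : a ∈ Ioo (0 : ℝ) 1) (hfar : 3 * |x₀| < a * ‖z‖) :
    ∫ t in Ioc (x₀ - r) (x₀ + r), poisson z t ≤ r / (1 - a) ^ 2 * (z.im / ‖z‖ ^ 2) := by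
  obtain ⟨ha₀, ha₁⟩ := ha
  have htri : ‖z‖ ≤ ‖z - x₀‖ + |x₀| := by
    simpa [Complex.norm_real] using norm_le_norm_sub_add z (x₀ : ℂ)
  have hfar' : (1 - a) * ‖z‖ ≤ ‖z - x₀‖ - r := by nlinarith [norm_nonneg z]
  refine (integral_poisson_Ioc_le_of_mul_norm_le hz hr (by linarith) hfar').trans ?_
  refine mul_le_mul_of_nonneg_right ?_ (by positivity)
  rw [div_le_div_iff₀ (by positivity) (by nlinarith)]
  nlinarith [mul_nonneg (mul_nonneg hr (sq_nonneg (1 - a))) (by linarith [Real.pi_gt_three] :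
    (0 : ℝ) ≤ Real.pi - 2)]

end Poisson

section HarmonicMeasure

variable {z : ℂ}

lemma omegaUHP_le_integral_poisson_Ioc (hz : 0 < z.im) {B : Set ℂ} {p q : ℝ}
    (hB : {t : ℝ | (t : ℂ) ∈ B} ⊆ Ioc p q) :
    omegaUHP z B ≤ ∫ t in Ioc p q, poisson z t :=
  setIntegral_mono_set (continuous_poisson hz).integrableOn_Ioc
    (ae_of_all _ (poisson_nonneg hz)) hB.eventuallyLE

lemma omegaUHP_image_ofReal {I : Set ℝ} {p q : ℝ} (hIoo : Ioo p q ⊆ I) (hIcc : I ⊆ Icc p q) :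
    omegaUHP z ((↑) '' I) = ∫ t in Ioc p q, poisson z t := by
  change ∫ t in Complex.ofReal ⁻¹' (Complex.ofReal '' I), poisson z t = _
  rw [preimage_image_eq _ Complex.ofReal_injective]
  refine setIntegral_congr_set ?_
  have hI : I =ᵐ[volume] Icc p q :=
    hIcc.eventuallyLE.antisymm ((Ioo_ae_eq_Icc (μ := volume)).symm.le.trans hIoo.eventuallyLE)
  exact hI.trans Ioc_ae_eq_Icc.symm

end HarmonicMeasure

lemma ofReal_omegaUHP_le_of_subset_closedBall {z : ℂ} (hz : 0 < z.im) {K : Set ℂ}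
    {ρ r₀ R : ℝ} (hρ : 0 < ρ) (hK : K ⊆ Metric.closedBall 0 ρ) (hρR : 4 * ρ ≤ R) (hr₀ : r₀ ≤ R) :
    ENNReal.ofReal (omegaUHP z K)
      ≤ (Metric.closedBall 0 R).indicator 1 z
        + ENNReal.ofReal (16 * ρ / Real.pi) *
            {w : ℂ | 0 < w.im ∧ r₀ ≤ ‖w‖}.indicator
              (fun w => ENNReal.ofReal (w.im / ‖w‖ ^ 2)) z := by
  have htrace : {t : ℝ | (t : ℂ) ∈ K} ⊆ Ioc (0 - 2 * ρ) (0 + 2 * ρ) := fun t ht => by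
    have := hK ht
    rw [Metric.mem_closedBall, dist_zero_right, Complex.norm_real, Real.norm_eq_abs] at this
    constructor <;> linarith [abs_le.1 this]
  have hω := omegaUHP_le_integral_poisson_Ioc hz htrace
  by_cases hzR : ‖z‖ ≤ R
  · rw [indicator_of_mem (mem_closedBall_zero_iff.2 hzR)]
    exact le_add_right (ENNReal.ofReal_le_one.2 (hω.trans (integral_poisson_Ioc_le_one
      (by linarith))))
  have hzR : R < ‖z‖ := not_le.1 hzR
  have hfar : 1 / 2 * ‖z‖ ≤ ‖z - ((0 : ℝ) : ℂ)‖ - 2 * ρ := by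
    rw [Complex.ofReal_zero, sub_zero]; linarith
  have hC : 2 * (2 * ρ) / (Real.pi * (1 / 2) ^ 2) = 16 * ρ / Real.pi := by ring
  rw [indicator_of_mem (show z ∈ {w : ℂ | 0 < w.im ∧ r₀ ≤ ‖w‖} from ⟨hz, by linarith⟩),
    ← ENNReal.ofReal_mul (by positivity)]
  refine le_add_left (ENNReal.ofReal_le_ofReal (hω.trans ?_))
  simpa only [hC] using
    integral_poisson_Ioc_le_of_mul_norm_le hz (by positivity) (by norm_num) hfar

lemma balUHP_lt_top_of_isCompact (μ : Measure ℂ) [IsFiniteMeasureOnCompacts μ]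
    {r₀ : ℝ} (hB : (∫⁻ z in {z : ℂ | 0 < z.im ∧ r₀ ≤ ‖z‖},
        ENNReal.ofReal (z.im / ‖z‖ ^ 2) ∂μ) < ⊤)
    {K : Set ℂ} (hK : IsCompact K) : balUHP μ K < ⊤ := by
  obtain ⟨ρ, hρ, hKρ⟩ := hK.isBounded.subset_closedBall_lt 0 0
  set R := max (4 * ρ) r₀
  set A := {z : ℂ | 0 < z.im ∧ r₀ ≤ ‖z‖}
  have hA : MeasurableSet A :=
    (measurableSet_lt measurable_const Complex.measurable_im).inter
      (measurableSet_le measurable_const measurable_norm)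
  set g := fun z => (Metric.closedBall 0 R).indicator 1 z
    + ENNReal.ofReal (16 * ρ / Real.pi) * A.indicator (fun w => ENNReal.ofReal (w.im / ‖w‖ ^ 2)) z
  have hlin : ∫⁻ z in {z : ℂ | 0 < z.im}, ENNReal.ofReal (omegaUHP z K) ∂μ
      ≤ μ (Metric.closedBall 0 R)
        + ENNReal.ofReal (16 * ρ / Real.pi) * ∫⁻ z in A, ENNReal.ofReal (z.im / ‖z‖ ^ 2) ∂μ :=
    calc _ ≤ ∫⁻ z in {z : ℂ | 0 < z.im}, g z ∂μ :=
          setLIntegral_mono' (measurableSet_lt measurable_const Complex.measurable_im)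
            fun z hz => ofReal_omegaUHP_le_of_subset_closedBall hz hρ hKρ
              (le_max_left _ _) (le_max_right _ _)
      _ ≤ ∫⁻ z, g z ∂μ := setLIntegral_le_lintegral _ _
      _ = _ := by
          rw [lintegral_add_left (measurable_one.indicator measurableSet_closedBall),
            lintegral_indicator_one measurableSet_closedBall,
            lintegral_const_mul' _ _ ENNReal.ofReal_ne_top, lintegral_indicator hA]
  exact ENNReal.add_lt_top.2
    ⟨hlin.trans_lt (ENNReal.add_lt_top.2 ⟨measure_closedBall_lt_top,
      ENNReal.mul_lt_top ENNReal.ofReal_lt_top hB⟩),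
      (measure_mono inter_subset_left).trans_lt hK.measure_lt_top⟩

noncomputable def poissonMajorant (x₀ r a : ℝ) (z : ℂ) : ℝ≥0∞ :=
  {w : ℂ | ‖w - x₀‖ ≤ r}.indicator 1 z
    + {w : ℂ | ‖w‖ ≤ 3 * |x₀| / a}.indicator (fun _ => ENNReal.ofReal (2 * r / (a * |x₀|))) z
    + {w : ℂ | 0 ≤ w.im ∧ |x₀| ≤ ‖w‖}.indicator
        (fun w => ENNReal.ofReal (r / (1 - a) ^ 2) * ENNReal.ofReal (w.im / ‖w‖ ^ 2)) z
    + ∫⁻ t in Ioc r (a * |x₀|),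
        {w : ℂ | ‖w - x₀‖ ≤ t}.indicator (fun _ => ENNReal.ofReal (r / t ^ 2)) z

lemma ofReal_integral_poisson_Ioc_le_poissonMajorant {z : ℂ} (hz : 0 < z.im) {x₀ r a : ℝ}
    (hr : 0 < r) (hrx : r ≤ |x₀|) (ha : a ∈ Ioo (0 : ℝ) 1) :
    ENNReal.ofReal (∫ t in Ioc (x₀ - r) (x₀ + r), poisson z t) ≤ poissonMajorant x₀ r a z := by
  obtain ⟨ha₀, ha₁⟩ := ha
  have hx₀ : 0 < |x₀| := hr.trans_le hrx
  set s := ‖z - x₀‖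
  set ω := ∫ t in Ioc (x₀ - r) (x₀ + r), poisson z t
  rw [poissonMajorant]
  rcases le_or_gt s r with hsr | hsr
  · rw [indicator_of_mem (show z ∈ {w : ℂ | ‖w - x₀‖ ≤ r} from hsr)]
    exact le_add_right (le_add_right (le_add_right
      (ENNReal.ofReal_le_one.2 (integral_poisson_Ioc_le_one (by linarith)))))
  have hωs : ω ≤ r / s := integral_poisson_Ioc_le_div hz hr hsr
  have hs₀ : 0 < s := hr.trans hsr
  have htri : ‖z‖ ≤ s + |x₀| := by
    simpa [Complex.norm_real] using norm_le_norm_sub_add z (x₀ : ℂ)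
  have hnear : ∀ w : ℂ, ‖w‖ ≤ 3 * |x₀| / a →
      {w : ℂ | ‖w‖ ≤ 3 * |x₀| / a}.indicator (fun _ => ENNReal.ofReal (2 * r / (a * |x₀|))) w
        = ENNReal.ofReal (2 * r / (a * |x₀|)) := fun w hw =>
    indicator_of_mem (show w ∈ {w : ℂ | ‖w‖ ≤ 3 * |x₀| / a} from hw) _
  rcases le_or_gt s (a * |x₀|) with hsa | hsa
  · have hz₃ : ‖z‖ ≤ 3 * |x₀| / a := by
      rw [le_div_iff₀ ha₀]; nlinarith
    calc ENNReal.ofReal ω ≤ ENNReal.ofReal (r / (a * |x₀|) + (r / s - r / (a * |x₀|))) :=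
          ENNReal.ofReal_le_ofReal (by linarith)
      _ ≤ ENNReal.ofReal (2 * r / (a * |x₀|)) + ENNReal.ofReal (r / s - r / (a * |x₀|)) := by
          rw [ENNReal.ofReal_add (by positivity)
            (sub_nonneg.2 (div_le_div_of_nonneg_left hr.le hs₀ hsa))]
          gcongr
          linarith
      _ ≤ _ := by
          rw [hnear z hz₃]
          exact add_le_add (le_add_right le_add_self)
            (ofReal_div_sub_div_le_lintegral_indicator hr.le hr hsr.le hsa)
  have hωa : ω ≤ 2 * r / (a * |x₀|) := by
    have : r / s ≤ r / (a * |x₀|) := div_le_div_of_nonneg_left hr.le (by positivity) hsa.le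
    rw [mul_div_assoc]
    linarith [div_nonneg hr.le (by positivity : (0 : ℝ) ≤ a * |x₀|)]
  rcases le_or_gt ‖z‖ (3 * |x₀| / a) with hz₃ | hz₃
  · rw [hnear z hz₃]
    exact le_add_right (le_add_right (le_add_self.trans' (ENNReal.ofReal_le_ofReal hωa)))
  · have hfar : 3 * |x₀| < a * ‖z‖ := by rw [div_lt_iff₀ ha₀] at hz₃; linarith
    have hz₀ : |x₀| ≤ ‖z‖ := by nlinarith
    rw [indicator_of_mem (show z ∈ {w : ℂ | 0 ≤ w.im ∧ |x₀| ≤ ‖w‖} from ⟨hz.le, hz₀⟩),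
      ← ENNReal.ofReal_mul (by positivity)]
    exact le_add_right (le_add_left (ENNReal.ofReal_le_ofReal
      (integral_poisson_Ioc_le_of_three_mul_lt hz hr.le hrx ⟨ha₀, ha₁⟩ hfar)))

lemma setLIntegral_poissonMajorant_le (μ : Measure ℂ) [IsFiniteMeasureOnCompacts μ]
    {x₀ r a : ℝ} (hr : 0 < r) :
    ∫⁻ z in {z : ℂ | 0 < z.im}, poissonMajorant x₀ r a z ∂μ
      ≤ μ ({w : ℂ | ‖w - x₀‖ ≤ r} ∩ {z : ℂ | 0 < z.im})
        + ENNReal.ofReal (2 * r / (a * |x₀|)) *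
            μ.restrict {z : ℂ | 0 ≤ z.im} {w : ℂ | ‖w‖ ≤ 3 * |x₀| / a}
        + ENNReal.ofReal (r / (1 - a) ^ 2) *
            ∫⁻ z in {z : ℂ | 0 ≤ z.im ∧ |x₀| ≤ ‖z‖}, ENNReal.ofReal (z.im / ‖z‖ ^ 2) ∂μ
        + ENNReal.ofReal (r * max 0 (∫ t in Ioc r (a * |x₀|),
            (μ.restrict {z : ℂ | 0 ≤ z.im} {w : ℂ | ‖w - x₀‖ ≤ t}).toReal / t ^ 2)) := by
  set S := {z : ℂ | 0 < z.im}
  set Sc := {z : ℂ | 0 ≤ z.im}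
  have hSSc : S ⊆ Sc := fun z (hz : 0 < z.im) => hz.le
  have hball : ∀ t, MeasurableSet {w : ℂ | ‖w - x₀‖ ≤ t} := fun t =>
    measurableSet_le (by fun_prop) measurable_const
  have hball₀ : MeasurableSet {w : ℂ | ‖w‖ ≤ 3 * |x₀| / a} :=
    measurableSet_le measurable_norm measurable_const
  have hA : MeasurableSet {z : ℂ | 0 ≤ z.im ∧ |x₀| ≤ ‖z‖} :=
    (measurableSet_le measurable_const Complex.measurable_im).inter
      (measurableSet_le measurable_const measurable_norm)
  have hq : Measurable fun w : ℂ => ENNReal.ofReal (w.im / ‖w‖ ^ 2) := by fun_prop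
  unfold poissonMajorant
  set g₁ := {w : ℂ | ‖w - x₀‖ ≤ r}.indicator (1 : ℂ → ℝ≥0∞)
  set g₂ := {w : ℂ | ‖w‖ ≤ 3 * |x₀| / a}.indicator
    fun _ => ENNReal.ofReal (2 * r / (a * |x₀|))
  set g₃ := {w : ℂ | 0 ≤ w.im ∧ |x₀| ≤ ‖w‖}.indicator
    fun w => ENNReal.ofReal (r / (1 - a) ^ 2) * ENNReal.ofReal (w.im / ‖w‖ ^ 2)
  have h₁ : Measurable g₁ := measurable_one.indicator (hball r)
  have h₂ : Measurable g₂ := measurable_const.indicator hball₀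
  have h₃ : Measurable g₃ := (measurable_const.mul hq).indicator hA
  rw [lintegral_add_left (f := fun z => g₁ z + g₂ z + g₃ z) ((h₁.add h₂).add h₃),
    lintegral_add_left (f := fun z => g₁ z + g₂ z) (h₁.add h₂), lintegral_add_left h₁]
  gcongr ?_ + ?_ + ?_ + ?_
  · rw [lintegral_indicator_one (hball r), Measure.restrict_apply (hball r)]
  · rw [← lintegral_indicator_const hball₀]
    exact lintegral_mono_set hSSc
  · rw [lintegral_indicator hA, lintegral_const_mul' _ _ ENNReal.ofReal_ne_top]
    gcongr
    exact Measure.restrict_le_self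
  · have hfin : μ.restrict Sc {w : ℂ | ‖w - x₀‖ ≤ a * |x₀|} ≠ ⊤ := by
      rw [Measure.restrict_apply (hball _)]
      refine ne_top_of_le_ne_top ?_ (measure_mono inter_subset_left)
      simpa [Metric.closedBall, dist_eq_norm] using
        (measure_closedBall_lt_top (μ := μ) (x := (x₀ : ℂ)) (r := a * |x₀|)).ne
    refine (lintegral_mono_set hSSc).trans ?_
    rw [lintegral_lintegral_Ioc_indicator_eq_ofReal_integral _ _ hr.le hr hfin]
    gcongr
    exact le_max_right _ _

theorem balUHP_image_ofReal_le (μ : Measure ℂ) [IsFiniteMeasureOnCompacts μ]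
    {x₀ r a : ℝ} {I : Set ℝ} (hr : 0 < r) (hrx : r ≤ |x₀|) (ha : a ∈ Ioo (0 : ℝ) 1)
    (hIoo : Ioo (x₀ - r) (x₀ + r) ⊆ I) (hIcc : I ⊆ Icc (x₀ - r) (x₀ + r)) :
    balUHP μ ((fun t : ℝ => (t : ℂ)) '' I)
      ≤ μ.restrict {z : ℂ | 0 ≤ z.im} {w : ℂ | ‖w - x₀‖ ≤ r}
        + ENNReal.ofReal (2 * r / (a * |x₀|)) *
            μ.restrict {z : ℂ | 0 ≤ z.im} {w : ℂ | ‖w‖ ≤ 3 * |x₀| / a}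
        + ENNReal.ofReal (r / (1 - a) ^ 2) *
            ∫⁻ z in {z : ℂ | 0 ≤ z.im ∧ |x₀| ≤ ‖z‖}, ENNReal.ofReal (z.im / ‖z‖ ^ 2) ∂μ
        + ENNReal.ofReal (r * max 0 (∫ t in Ioc r (a * |x₀|),
            (μ.restrict {z : ℂ | 0 ≤ z.im} {w : ℂ | ‖w - x₀‖ ≤ t}).toReal / t ^ 2)) := by
  set E := (fun t : ℝ => (t : ℂ)) '' I
  set D := {w : ℂ | ‖w - x₀‖ ≤ r}
  set S := {z : ℂ | 0 < z.im}
  set Sc := {z : ℂ | 0 ≤ z.im}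
  have hD : MeasurableSet D := measurableSet_le (by fun_prop) measurable_const
  have hS : MeasurableSet S := measurableSet_lt measurable_const Complex.measurable_im
  have hED : E ⊆ D ∩ Sc := by
    rintro _ ⟨t, ht, rfl⟩
    refine ⟨?_, by simp [Sc]⟩
    have := hIcc ht
    change ‖(t : ℂ) - x₀‖ ≤ r
    rw [← Complex.ofReal_sub, Complex.norm_real, Real.norm_eq_abs, abs_le]
    constructor <;> linarith [this.1, this.2]
  have hdisj : Disjoint E (D ∩ S) := by
    rw [disjoint_left]
    rintro _ ⟨t, -, rfl⟩ ⟨-, ht⟩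
    simp [S] at ht
  have hreal : μ (D ∩ S) + μ (E ∩ {z : ℂ | z.im ≤ 0}) ≤ μ.restrict Sc D :=
    calc μ (D ∩ S) + μ (E ∩ {z : ℂ | z.im ≤ 0}) ≤ μ E + μ (D ∩ S) := by
          rw [add_comm]; gcongr; exact inter_subset_left
      _ = μ (E ∪ (D ∩ S)) := (measure_union hdisj (hD.inter hS)).symm
      _ ≤ μ (D ∩ Sc) := measure_mono (union_subset hED (inter_subset_inter_right _
          fun z (hz : 0 < z.im) => hz.le))
      _ = μ.restrict Sc D := (Measure.restrict_apply hD).symm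
  have hpt : ∀ z ∈ S, ENNReal.ofReal (omegaUHP z E) ≤ poissonMajorant x₀ r a z := fun z hz => by
    rw [omegaUHP_image_ofReal hIoo hIcc]
    exact ofReal_integral_poisson_Ioc_le_poissonMajorant hz hr hrx ha
  calc balUHP μ E ≤ (∫⁻ z in S, poissonMajorant x₀ r a z ∂μ) + μ (E ∩ {z : ℂ | z.im ≤ 0}) :=
        add_le_add (setLIntegral_mono' hS hpt) le_rfl
    _ ≤ _ := by
        grw [setLIntegral_poissonMajorant_le μ hr, add_right_comm _ _ (μ _),
          add_right_comm _ _ (μ _), add_right_comm _ _ (μ _), hreal]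

/-- Theorem `th:cup`: if `μ` satisfies the Blaschke condition near infinity in the upper
half-plane, then its balayage `μ^bal` out of the upper half-plane is finite on compact
sets, and for all `t₁ < t₂` with `t₁·t₂ ≥ 0` and every `a ∈ (0,1)`, with `x₀ = (t₁+t₂)/2`,
`r = (t₂-t₁)/2`, `E = (t₁,t₂]` if `t₁ ≥ 0` and `E = [t₁,t₂)` if `t₂ ≤ 0`, and `μ̄` the
restriction of `μ` to the closed upper half-plane, one has
`μ^bal(E) ≤ μ̄(D̄(x₀,r)) + (2r/(a|x₀|))·μ̄(D̄(0, 3|x₀|/a))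
  + (r/(1-a)²)·∫_{Im z ≥ 0, |z| ≥ |x₀|} Im z/|z|² dμ
  + r·max(0, ∫_r^{a|x₀|} μ̄(D̄(x₀,t))/t² dt)`. -/
theorem balUHP_estimate_of_blaschke
    (μ : Measure ℂ) [IsFiniteMeasureOnCompacts μ]
    (hB : ∃ r₀ > (0 : ℝ),
      (∫⁻ z in {z : ℂ | 0 < z.im ∧ r₀ ≤ ‖z‖},
        ENNReal.ofReal (z.im / ‖z‖ ^ 2) ∂μ) < ⊤) :
    (∀ K : Set ℂ, IsCompact K → balUHP μ K < ⊤) ∧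
    (∀ t₁ t₂ a : ℝ, t₁ < t₂ → 0 ≤ t₁ * t₂ → a ∈ Ioo (0 : ℝ) 1 →
      balUHP μ ((fun t : ℝ => (t : ℂ)) ''
          (if 0 ≤ t₁ then Ioc t₁ t₂ else Ico t₁ t₂))
        ≤ μ.restrict {z : ℂ | 0 ≤ z.im}
              {w : ℂ | ‖w - (((t₁ + t₂) / 2 : ℝ) : ℂ)‖ ≤ (t₂ - t₁) / 2}
          + ENNReal.ofReal (2 * ((t₂ - t₁) / 2) / (a * |(t₁ + t₂) / 2|)) *
              μ.restrict {z : ℂ | 0 ≤ z.im}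
                {w : ℂ | ‖w‖ ≤ 3 * |(t₁ + t₂) / 2| / a}
          + ENNReal.ofReal (((t₂ - t₁) / 2) / (1 - a) ^ 2) *
              (∫⁻ z in {z : ℂ | 0 ≤ z.im ∧ |(t₁ + t₂) / 2| ≤ ‖z‖},
                ENNReal.ofReal (z.im / ‖z‖ ^ 2) ∂μ)
          + ENNReal.ofReal (((t₂ - t₁) / 2) * max 0
              (∫ t in Ioc ((t₂ - t₁) / 2) (a * |(t₁ + t₂) / 2|),
                (μ.restrict {z : ℂ | 0 ≤ z.im}
                    {w : ℂ | ‖w - (((t₁ + t₂) / 2 : ℝ) : ℂ)‖ ≤ t}).toReal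
                  / t ^ 2))) := by
  refine ⟨fun K hK => ?_, fun t₁ t₂ a h₁₂ hprod ha => ?_⟩
  · obtain ⟨r₀, -, hr₀⟩ := hB
    exact balUHP_lt_top_of_isCompact μ hr₀ hK
  have hr : 0 < (t₂ - t₁) / 2 := by linarith
  have hrx : (t₂ - t₁) / 2 ≤ |(t₁ + t₂) / 2| :=
    (le_abs_self _).trans (sq_le_sq.1 (by nlinarith))
  have ht₁ : (t₁ + t₂) / 2 - (t₂ - t₁) / 2 = t₁ := by ring
  have ht₂ : (t₁ + t₂) / 2 + (t₂ - t₁) / 2 = t₂ := by ring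
  apply balUHP_image_ofReal_le μ hr hrx ha <;> rw [ht₁, ht₂] <;> split_ifs
  exacts [Ioo_subset_Ioc_self, Ioo_subset_Ico_self, Ioc_subset_Icc_self, Ico_subset_Icc_self]
end
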